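/- Let λ be a Ferrers diagram and N(m,n) the number of northeastern lattice paths from (m,0) to (0,n) avoiding the interior of λ. Then for all m ≥ 1 and n ≥ 0: N(m-1,n) * N(m+1,n) ≤ N(m,n)^2. -/

import Mathlib

/-- A northeastern lattice path from `(m,0)` to `(0,n)`: points `(i,j)` with `i` the row
(increasing southward) and `j` the column (increasing eastward); each step goes one unit
north (`i` decreases) or east (`j` increases). The point sequence is frozen at `(0,n)`
after `m+n` steps. -/
structure NEPath (m n : ℕ) where
  pts : ℕ → ℕ × ℕ
  start : pts 0 = (m, 0)
  step : ∀ k < m + n,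
    ((pts (k+1)).1 + 1 = (pts k).1 ∧ (pts (k+1)).2 = (pts k).2) ∨
    ((pts (k+1)).1 = (pts k).1 ∧ (pts (k+1)).2 = (pts k).2 + 1)
  tail : ∀ k, m + n ≤ k → pts k = (0, n)

/-- A path avoids (the interior of) the Ferrers diagram with row lengths `lam`
(rows indexed from the north starting at 0) iff each of its points `(i,j)` lies weakly
southeast of the staircase boundary, i.e. `lam i ≤ j`; touching the boundary is allowed. -/
def Avoids (lam : ℕ → ℕ) {m n : ℕ} (p : NEPath m n) : Prop :=
  ∀ k, lam (p.pts k).1 ≤ (p.pts k).2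

/-- `pathCount lam m n` is the number of northeastern lattice paths from `(m,0)` to `(0,n)`
that do not go inside the Ferrers diagram `lam`. -/
noncomputable def pathCount (lam : ℕ → ℕ) (m n : ℕ) : ℕ :=
  Nat.card {p : NEPath m n // Avoids lam p}

/-- `lam` is the row-length function of the Ferrers diagram of a partition:
weakly decreasing with finitely many nonzero rows. -/
def IsFerrers (lam : ℕ → ℕ) : Prop :=
  Antitone lam ∧ ∃ K, ∀ i, K ≤ i → lam i = 0


/-!
Encode a path from `(m,0)` by its column sequence `col`; its point at time `k` is
`(m + col k - k, col k)`. For `p` from `(m-1,0)` and `q` from `(m+1,0)`, the points `p k` and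
`q (k+1)` are at vertical distance one exactly when `p.col k = q.col (k+1)`, and before the first
such time `t` one has `p.col k < q.col (k+1)`. Exchanging the two sequences up to `t` gives the
column sequences of two paths from `(m,0)`, and exchanging at the first meeting is an involution
on pairs of sequences, so `Φ` is injective. Both image paths avoid `λ` because `λ` is weakly
decreasing and the piece of `q` moved north stays weakly southeast of a point of `p`.
-/

def UnitSteps (f : ℕ → ℕ) : Prop :=
  ∀ k, f (k + 1) = f k ∨ f (k + 1) = f k + 1

namespace UnitSteps

variable {f g : ℕ → ℕ}

theorem monotone (hf : UnitSteps f) : Monotone f :=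
  monotone_nat_of_le_succ fun k => by rcases hf k with h | h <;> omega

theorem le_add (hf : UnitSteps f) (k i : ℕ) : f (k + i) ≤ f k + i := by
  induction i with
  | zero => rfl
  | succ i ih =>
    rw [← Nat.add_assoc]
    rcases hf (k + i) with h | h <;> omega

theorem comp_pred (hf : UnitSteps f) : UnitSteps fun k => f (k - 1) := by
  rintro (_ | k)
  · exact Or.inl rfl
  · exact hf k

theorem comp_succ (hf : UnitSteps f) : UnitSteps fun k => f (k + 1) :=
  fun k => hf (k + 1)

end UnitSteps

structure IsColSeq (m n : ℕ) (c : ℕ → ℕ) : Prop where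
  zero : c 0 = 0
  unitSteps : UnitSteps c
  tail : ∀ k, m + n ≤ k → c k = n

namespace NEPath

variable {m n : ℕ}

def col (p : NEPath m n) (k : ℕ) : ℕ := (p.pts k).2

theorem col_zero (p : NEPath m n) : p.col 0 = 0 := by
  simp [col, p.start]

theorem col_of_le (p : NEPath m n) {k : ℕ} (hk : m + n ≤ k) : p.col k = n := by
  simp [col, p.tail k hk]

theorem unitSteps_col (p : NEPath m n) : UnitSteps p.col := by
  intro k
  rcases lt_or_ge k (m + n) with hk | hk
  · rcases p.step k hk with ⟨-, h⟩ | ⟨-, h⟩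
    exacts [Or.inl h, Or.inr h]
  · exact Or.inl (by rw [p.col_of_le hk, p.col_of_le (by omega)])

theorem col_le (p : NEPath m n) (k : ℕ) : p.col k ≤ n := by
  rcases le_total k (m + n) with hk | hk
  · exact (p.unitSteps_col.monotone hk).trans (p.col_of_le le_rfl).le
  · exact (p.col_of_le hk).le

theorem row_add_eq (p : NEPath m n) {k : ℕ} (hk : k ≤ m + n) :
    (p.pts k).1 + k = m + p.col k := by
  induction k with
  | zero => simp [col, p.start]
  | succ k ih =>
    have := ih (by omega)
    rcases p.step k (by omega) with ⟨h₁, h₂⟩ | ⟨h₁, h₂⟩ <;> simp only [col] at * <;> omega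

theorem pts_eq (p : NEPath m n) (k : ℕ) : p.pts k = (m + p.col k - k, p.col k) := by
  rcases le_total k (m + n) with hk | hk
  · have := p.row_add_eq hk
    exact Prod.ext (by simp only [col] at this ⊢; omega) rfl
  · rw [p.col_of_le hk, p.tail k hk, Prod.mk.injEq]
    omega

theorem col_injective : Function.Injective (col : NEPath m n → ℕ → ℕ) := by
  intro p q h
  have hpts : p.pts = q.pts := funext fun k => by rw [p.pts_eq, q.pts_eq, h]
  cases p; cases q; cases hpts; rfl

instance : Finite (NEPath m n) :=
  Finite.of_injective (fun (p : NEPath m n) (k : Fin (m + n + 1)) =>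
      (⟨p.col k, Nat.lt_succ_of_le (p.col_le k)⟩ : Fin (n + 1))) fun p q h => by
    refine col_injective (funext fun k => ?_)
    rcases le_total k (m + n) with hk | hk
    · simpa using congrFun h ⟨k, by omega⟩
    · rw [p.col_of_le hk, q.col_of_le hk]

theorem avoids_iff {lam : ℕ → ℕ} (p : NEPath m n) :
    Avoids lam p ↔ ∀ k, lam (m + p.col k - k) ≤ p.col k := by
  simp only [Avoids, p.pts_eq]

def ofCol (c : ℕ → ℕ) (hc : IsColSeq m n c) : NEPath m n where
  pts k := (m + c k - k, c k)
  start := by simp [hc.zero]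
  step k hk := by
    have hlow := hc.unitSteps.le_add (k + 1) (m + n - (k + 1))
    rw [Nat.add_sub_cancel' hk, hc.tail _ le_rfl] at hlow
    rcases hc.unitSteps k with h | h
    · exact Or.inl ⟨by simp only [h]; omega, h⟩
    · exact Or.inr ⟨by simp only [h]; omega, h⟩
  tail k hk := by
    rw [hc.tail k hk, Prod.mk.injEq]
    omega

@[simp]
theorem col_ofCol (c : ℕ → ℕ) (hc : IsColSeq m n c) : (ofCol c hc).col = c := rfl

end NEPath

section Splice

variable (f g : ℕ → ℕ)

def splice (s k : ℕ) : ℕ := if k ≤ s then f k else g k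

noncomputable def firstMeet : ℕ := sInf {s | g s ≤ f s}

noncomputable def swapAtMeet (x : (ℕ → ℕ) × (ℕ → ℕ)) : (ℕ → ℕ) × (ℕ → ℕ) :=
  (splice x.1 x.2 (firstMeet x.1 x.2), splice x.2 x.1 (firstMeet x.1 x.2))

variable {f g}

theorem splice_of_le {s k : ℕ} (hk : k ≤ s) : splice f g s k = f k := if_pos hk

theorem splice_of_lt {s k : ℕ} (hk : s < k) : splice f g s k = g k := if_neg (by omega)

theorem splice_eq_right {s k : ℕ} (hs : f s = g s) (hk : s ≤ k) : splice f g s k = g k := by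
  rcases hk.eq_or_lt with rfl | hk
  · rw [splice_of_le le_rfl, hs]
  · exact splice_of_lt hk

theorem splice_splice (s : ℕ) : splice (splice f g s) (splice g f s) s = f := by
  funext k
  rcases le_or_gt k s with hk | hk
  · rw [splice_of_le hk, splice_of_le hk]
  · rw [splice_of_lt hk, splice_of_lt hk]

theorem firstMeet_le {s : ℕ} (hs : g s ≤ f s) : firstMeet f g ≤ s := Nat.sInf_le hs

theorem firstMeet_spec (h : ∃ s, g s ≤ f s) : g (firstMeet f g) ≤ f (firstMeet f g) :=
  Nat.sInf_mem h

theorem lt_of_lt_firstMeet {k : ℕ} (hk : k < firstMeet f g) : f k < g k :=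
  not_le.1 (Nat.notMem_of_lt_sInf hk : k ∉ {s | g s ≤ f s})

theorem firstMeet_splice (h : ∃ s, g s ≤ f s) :
    firstMeet (splice f g (firstMeet f g)) (splice g f (firstMeet f g)) = firstMeet f g := by
  set t := firstMeet f g
  have ht : splice g f t t ≤ splice f g t t := by
    simpa only [splice_of_le le_rfl] using firstMeet_spec h
  refine le_antisymm (firstMeet_le ht) (not_lt.1 fun hlt => ?_)
  have hk := firstMeet_spec ⟨t, ht⟩
  rw [splice_of_le hlt.le, splice_of_le hlt.le] at hk
  exact hk.not_gt (lt_of_lt_firstMeet hlt)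

theorem swapAtMeet_swapAtMeet {x : (ℕ → ℕ) × (ℕ → ℕ)} (h : ∃ s, x.2 s ≤ x.1 s) :
    swapAtMeet (swapAtMeet x) = x := by
  simp only [swapAtMeet, firstMeet_splice h, splice_splice]

theorem swapAtMeet_injOn : Set.InjOn swapAtMeet {x | ∃ s, x.2 s ≤ x.1 s} :=
  fun _ hx _ hy hxy => by
    rw [← swapAtMeet_swapAtMeet hx, hxy, swapAtMeet_swapAtMeet hy]

theorem UnitSteps.le_of_le_firstMeet (hf : UnitSteps f) (hg : UnitSteps g) (h₀ : f 0 ≤ g 0)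
    {k : ℕ} (hk : k ≤ firstMeet f g) : f k ≤ g k := by
  rcases k with _ | k
  · exact h₀
  · calc f (k + 1) ≤ f k + 1 := hf.le_add k 1
      _ ≤ g k := lt_of_lt_firstMeet hk
      _ ≤ g (k + 1) := hg.monotone k.le_succ

theorem UnitSteps.eq_at_firstMeet (hf : UnitSteps f) (hg : UnitSteps g) (h₀ : f 0 ≤ g 0)
    (h : ∃ s, g s ≤ f s) : g (firstMeet f g) = f (firstMeet f g) :=
  (firstMeet_spec h).antisymm (hf.le_of_le_firstMeet hg h₀ le_rfl)

theorem UnitSteps.splice (hf : UnitSteps f) (hg : UnitSteps g) {s : ℕ} (hs : f s = g s) :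
    UnitSteps (splice f g s) := by
  intro k
  rcases lt_trichotomy k s with hk | rfl | hk
  · rw [splice_of_le hk, splice_of_le hk.le]
    exact hf k
  · rw [splice_of_lt k.lt_succ_self, splice_of_le le_rfl, hs]
    exact hg k
  · rw [splice_of_lt hk, splice_of_lt (by omega)]
    exact hg k

end Splice

namespace NEPath

variable {M n : ℕ} (p : NEPath M n) (q : NEPath (M + 2) n)

theorem col_succ_le_col : q.col (M + n + 1) ≤ p.col (M + n) := by
  rw [p.col_of_le le_rfl]
  exact q.col_le _

noncomputable def meetTime : ℕ := firstMeet p.col fun k => q.col (k + 1)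

theorem meetTime_le : meetTime p q ≤ M + n := firstMeet_le (col_succ_le_col p q)

theorem col_le_col_succ_of_le_meetTime {k : ℕ} (hk : k ≤ meetTime p q) :
    p.col k ≤ q.col (k + 1) :=
  p.unitSteps_col.le_of_le_firstMeet q.unitSteps_col.comp_succ (by simp [col_zero]) hk

theorem col_succ_meetTime : q.col (meetTime p q + 1) = p.col (meetTime p q) :=
  p.unitSteps_col.eq_at_firstMeet q.unitSteps_col.comp_succ (by simp [col_zero])
    ⟨_, col_succ_le_col p q⟩

-- `p` moved one unit south up to time `meetTime p q`, then `q` one step ahead.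
noncomputable def phiFst : NEPath (M + 1) n :=
  ofCol (splice p.col (fun k => q.col (k + 1)) (meetTime p q))
    { zero := by rw [splice_of_le (Nat.zero_le _), p.col_zero]
      unitSteps := p.unitSteps_col.splice q.unitSteps_col.comp_succ (col_succ_meetTime p q).symm
      tail := fun k hk => by
        rw [splice_of_lt (by have := meetTime_le p q; omega)]
        exact q.col_of_le (by omega) }

-- `q` moved one unit north up to time `meetTime p q + 1`, then `p` one step behind.
noncomputable def phiSnd : NEPath (M + 1) n :=
  ofCol (splice q.col (fun k => p.col (k - 1)) (meetTime p q + 1))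
    { zero := by rw [splice_of_le (Nat.zero_le _), q.col_zero]
      unitSteps := q.unitSteps_col.splice p.unitSteps_col.comp_pred (col_succ_meetTime p q)
      tail := fun k hk => by
        rw [splice_eq_right (col_succ_meetTime p q) (by have := meetTime_le p q; omega)]
        exact p.col_of_le (by omega) }

theorem swapAtMeet_col :
    swapAtMeet (p.col, fun k => q.col (k + 1)) =
      ((phiFst p q).col, fun k => (phiSnd p q).col (k + 1)) := by
  refine Prod.ext rfl (funext fun k => ?_)
  simp [swapAtMeet, phiSnd, splice, meetTime]

theorem eq_of_phiFst_eq_of_phiSnd_eq {p p' : NEPath M n} {q q' : NEPath (M + 2) n}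
    (h₁ : phiFst p q = phiFst p' q') (h₂ : phiSnd p q = phiSnd p' q') : p = p' ∧ q = q' := by
  have h : (p.col, fun k => q.col (k + 1)) = (p'.col, fun k => q'.col (k + 1)) :=
    swapAtMeet_injOn ⟨_, col_succ_le_col p q⟩ ⟨_, col_succ_le_col p' q'⟩
      (by rw [swapAtMeet_col p q, swapAtMeet_col p' q', h₁, h₂])
  simp only [Prod.mk.injEq] at h
  refine ⟨col_injective h.1, col_injective (funext fun k => ?_)⟩
  cases k with
  | zero => rw [col_zero, col_zero]
  | succ k => exact congrFun h.2 k

variable {lam : ℕ → ℕ}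

theorem avoids_phiFst (hlam : Antitone lam) (hp : Avoids lam p) (hq : Avoids lam q) :
    Avoids lam (phiFst p q) := by
  rw [avoids_iff] at hp hq ⊢
  intro k
  simp only [phiFst, col_ofCol]
  rcases le_or_gt k (meetTime p q) with hk | hk
  · rw [splice_of_le hk]
    exact (hlam (by omega)).trans (hp k)
  · rw [splice_of_lt hk]
    simpa [show M + 2 + q.col (k + 1) - (k + 1) = M + 1 + q.col (k + 1) - k by omega]
      using hq (k + 1)

theorem avoids_phiSnd (hlam : Antitone lam) (hp : Avoids lam p) : Avoids lam (phiSnd p q) := by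
  rw [avoids_iff] at hp ⊢
  intro k
  simp only [phiSnd, col_ofCol]
  rcases le_or_gt k (meetTime p q + 1) with hk | hk
  · rw [splice_of_le hk]
    have hle : p.col (k - 1) ≤ q.col k := by
      rcases k with _ | k
      · simp [col_zero]
      · exact p.col_le_col_succ_of_le_meetTime q (by omega)
    exact (hlam (by omega)).trans ((hp (k - 1)).trans hle)
  · rw [splice_of_lt hk]
    simpa [show M + p.col (k - 1) - (k - 1) = M + 1 + p.col (k - 1) - k by omega]
      using hp (k - 1)

end NEPath

open NEPath in
/-- Equation (2) of the paper, proved by the injection Φ. -/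
theorem simion_eq_two (lam : ℕ → ℕ) (hlam : IsFerrers lam)
    (m n : ℕ) (hm : 1 ≤ m) :
    pathCount lam (m - 1) n * pathCount lam (m + 1) n ≤ pathCount lam m n ^ 2 := by
  obtain ⟨M, rfl⟩ : ∃ M, m = M + 1 := ⟨m - 1, by omega⟩
  let Φ : {p : NEPath M n // Avoids lam p} × {q : NEPath (M + 2) n // Avoids lam q} →
      {r : NEPath (M + 1) n // Avoids lam r} × {r : NEPath (M + 1) n // Avoids lam r} :=
    fun x => (⟨phiFst x.1.1 x.2.1, avoids_phiFst _ _ hlam.1 x.1.2 x.2.2⟩,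
      ⟨phiSnd x.1.1 x.2.1, avoids_phiSnd _ _ hlam.1 x.1.2⟩)
  have hΦ : Function.Injective Φ := by
    rintro ⟨⟨p, _⟩, ⟨q, _⟩⟩ ⟨⟨p', _⟩, ⟨q', _⟩⟩ h
    simp only [Φ, Prod.mk.injEq, Subtype.mk.injEq] at h
    obtain ⟨rfl, rfl⟩ := eq_of_phiFst_eq_of_phiSnd_eq h.1 h.2
    rfl
  simpa [pathCount, sq, Nat.card_prod] using Nat.card_le_card_of_injective Φ hΦ
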